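/- Assume (R), (P), (g) and let σ ∈ (α, β). (1) If u_t = P(u)_{xx} + g(u) admits a regular semi-wavefront from 1 with speed c connecting 1 to σ, then c > 0. (2) If it admits a regular semi-wavefront to 0 with speed c connecting σ to 0, then c < 0. -/

import Mathlib

open Set Filter MeasureTheory

noncomputable section

/-- `f` has a jump point at `ξ₀`: both one-sided limits exist, are finite, and differ. -/
def JumpPoint (f : ℝ → ℝ) (ξ₀ : ℝ) : Prop :=
  ∃ l r : ℝ, Tendsto f (nhdsWithin ξ₀ (Iio ξ₀)) (nhds l) ∧
    Tendsto f (nhdsWithin ξ₀ (Ioi ξ₀)) (nhds r) ∧ l ≠ r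

/-- The set of jump points of `f` lying in `I`. -/
def jumpSet (f : ℝ → ℝ) (I : Set ℝ) : Set ℝ := {ξ ∈ I | JumpPoint f ξ}

/-- Smooth, compactly supported test functions with support inside `I`. -/
def IsTestFun (I : Set ℝ) (ψ : ℝ → ℝ) : Prop :=
  ContDiff ℝ (⊤ : ℕ∞) ψ ∧ HasCompactSupport ψ ∧ tsupport ψ ⊆ I

/-- A traveling-wave solution of `u_t = P(u)_{xx} + g(u)` on the open interval `I`
with speed `c` and profile `φ`: `φ` is `[0,1]`-valued, continuous on `I` except
possibly at finitely many jump points, and satisfies the weak (distributional)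
formulation of `P(φ)'' + c φ' + g(φ) = 0` against all test functions. -/
structure IsTW (P g : ℝ → ℝ) (I : Set ℝ) (c : ℝ) (φ : ℝ → ℝ) : Prop where
  isOpen : IsOpen I
  ordConn : I.OrdConnected
  mapsTo : ∀ ξ ∈ I, φ ξ ∈ Icc (0:ℝ) 1
  jumps_finite : (jumpSet φ I).Finite
  cont : ContinuousOn φ (I \ jumpSet φ I)
  weak_eq : ∀ ψ : ℝ → ℝ, IsTestFun I ψ →
    ∫ ξ in I, P (φ ξ) * iteratedDeriv 2 ψ ξ =
      c * (∫ ξ in I, φ ξ * deriv ψ ξ) - ∫ ξ in I, g (φ ξ) * ψ ξ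

/-- A shock traveling wave: a traveling wave whose profile is not continuous. -/
def IsShockTW (P g : ℝ → ℝ) (I : Set ℝ) (c : ℝ) (φ : ℝ → ℝ) : Prop :=
  IsTW P g I c φ ∧ ¬ ContinuousOn φ I

/-- A wavefront: a global traveling wave with monotone non-constant profile whose
limits at `±∞` exist and are zeros of `g`. -/
def IsWavefront (P g : ℝ → ℝ) (c : ℝ) (φ : ℝ → ℝ) : Prop :=
  IsTW P g univ c φ ∧ (Monotone φ ∨ Antitone φ) ∧ (¬ ∃ k, ∀ ξ, φ ξ = k) ∧
  ∃ l m : ℝ, Tendsto φ atBot (nhds l) ∧ Tendsto φ atTop (nhds m) ∧ g l = 0 ∧ g m = 0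

/-- Condition (WF): `φ(−∞) = 1` and `φ(+∞) = 0`. -/
def CondWF (φ : ℝ → ℝ) : Prop :=
  Tendsto φ atBot (nhds 1) ∧ Tendsto φ atTop (nhds 0)

/-- A shock wavefront: a wavefront whose profile is not continuous. -/
def IsShockWavefront (P g : ℝ → ℝ) (c : ℝ) (φ : ℝ → ℝ) : Prop :=
  IsWavefront P g c φ ∧ ¬ ContinuousOn φ univ

/-- Condition (R): `P ∈ C²[0,1]`, `g ∈ C⁰[0,1]`, and `P' = D` and `g` have
finitely many zeros in `[0,1]`. -/
def CondR (P g : ℝ → ℝ) : Prop :=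
  ContDiffOn ℝ 2 P (Icc 0 1) ∧ ContinuousOn g (Icc 0 1) ∧
  {u ∈ Icc (0:ℝ) 1 | deriv P u = 0}.Finite ∧ {u ∈ Icc (0:ℝ) 1 | g u = 0}.Finite

/-- Condition (P): the diffusivity `D = P'` is positive on `(0,α) ∪ (β,1)` and
negative on `(α,β)`. -/
def CondP (P : ℝ → ℝ) (α β : ℝ) : Prop :=
  (∀ u ∈ Ioo (0:ℝ) α ∪ Ioo β 1, 0 < deriv P u) ∧ ∀ u ∈ Ioo α β, deriv P u < 0

/-- Condition (g): `g(0) = g(1) = 0`, `g < 0` on `(0,γ)` and `g > 0` on `(γ,1)`. -/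
def Condg (g : ℝ → ℝ) (γ : ℝ) : Prop :=
  g 0 = 0 ∧ g 1 = 0 ∧ (∀ u ∈ Ioo (0:ℝ) γ, g u < 0) ∧ ∀ u ∈ Ioo γ 1, 0 < g u

/-- `φ` has exactly one jump point, located at `ξs`, with left limit `φr` and
right limit `φl`. -/
def HasSingleJump (φ : ℝ → ℝ) (ξs φl φr : ℝ) : Prop :=
  jumpSet φ univ = {ξs} ∧
  Tendsto φ (nhdsWithin ξs (Iio ξs)) (nhds φr) ∧
  Tendsto φ (nhdsWithin ξs (Ioi ξs)) (nhds φl)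

/-- (Locally) absolutely continuous on `I`: an indefinite integral of a locally
integrable function. -/
def AbsContOn (F : ℝ → ℝ) (I : Set ℝ) : Prop :=
  ∃ h : ℝ → ℝ, LocallyIntegrableOn h I volume ∧
    ∀ a ∈ I, ∀ b ∈ I, F b - F a = ∫ t in a..b, h t

/-- The real interval `(−∞, a)`, `a ∈ ℝ ∪ {±∞}`. -/
def leftRay (a : EReal) : Set ℝ := {ξ : ℝ | (ξ : EReal) < a}

/-- The real interval `(a, +∞)`, `a ∈ ℝ ∪ {±∞}`. -/
def rightRay (a : EReal) : Set ℝ := {ξ : ℝ | a < (ξ : EReal)}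

/-- `φ(ξ) → L` as `ξ` tends to the right endpoint `a` of its domain. -/
def TendstoRightEnd (φ : ℝ → ℝ) (a : EReal) (L : ℝ) : Prop :=
  (a = ⊤ → Tendsto φ atTop (nhds L)) ∧
  ∀ x : ℝ, a = (x : EReal) → Tendsto φ (nhdsWithin x (Iio x)) (nhds L)

/-- `φ(ξ) → L` as `ξ` tends to the left endpoint `a` of its domain. -/
def TendstoLeftEnd (φ : ℝ → ℝ) (a : EReal) (L : ℝ) : Prop :=
  (a = ⊥ → Tendsto φ atBot (nhds L)) ∧
  ∀ x : ℝ, a = (x : EReal) → Tendsto φ (nhdsWithin x (Ioi x)) (nhds L)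

/-- A regular semi-wavefront from `1`: a regular traveling wave on `I = (−∞, a)`
with monotone non-constant profile tending to `1` at `−∞`. -/
def IsSemiWFfrom1 (P g : ℝ → ℝ) (a : EReal) (c : ℝ) (φ : ℝ → ℝ) : Prop :=
  IsTW P g (leftRay a) c φ ∧ ContinuousOn φ (leftRay a) ∧
  (MonotoneOn φ (leftRay a) ∨ AntitoneOn φ (leftRay a)) ∧
  (¬ ∃ k, ∀ ξ ∈ leftRay a, φ ξ = k) ∧
  Tendsto φ atBot (nhds 1)

/-- A regular semi-wavefront to `0`: a regular traveling wave on `I = (a, +∞)`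
with monotone non-constant profile tending to `0` at `+∞`. -/
def IsSemiWFto0 (P g : ℝ → ℝ) (a : EReal) (c : ℝ) (φ : ℝ → ℝ) : Prop :=
  IsTW P g (rightRay a) c φ ∧ ContinuousOn φ (rightRay a) ∧
  (MonotoneOn φ (rightRay a) ∨ AntitoneOn φ (rightRay a)) ∧
  (¬ ∃ k, ∀ ξ ∈ rightRay a, φ ξ = k) ∧
  Tendsto φ atTop (nhds 0)


/-!
The weak equation says that `P(φ) + W`, where `W' = cφ + ∫ g(φ)`, has vanishing distributional
second derivative; mollifying shows that such a continuous function is affine. Hence `P(φ)` is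
`C¹` and its flux `d = P(φ)'` satisfies `d v - d u = -c (φ v - φ u) - ∫ᵤᵛ g(φ)`.

A semi-wavefront from `1` to `σ ∈ (α, β)` decreases. Where `φ = β`, `P(φ)` is nonincreasing to
the left (`P' > 0` on `(β, 1)`), so `d ≤ 0`; further right, where `φ = μ ∈ (max σ γ, β)`, `P(φ)` is
nondecreasing to the right (`P' < 0` on `(α, β)`), so `d ≥ 0`. Between the two points `g(φ) > 0`,
so the flux identity forces `c (β - μ) > 0`. For a semi-wavefront from `σ` to `0` the same
argument runs at the level `α`, with `g < 0` on `(0, γ)`.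
-/

open scoped Convolution

lemma exists_Icc_subset_of_isCompact {U K : Set ℝ} (hU : IsOpen U) (hconn : U.OrdConnected)
    (hK : IsCompact K) (hne : K.Nonempty) (hKU : K ⊆ U) :
    ∃ l r, Icc l r ⊆ U ∧ K ⊆ Ioo l r := by
  obtain ⟨δ, hδ, hδU⟩ := hK.exists_cthickening_subset_open hU hKU
  have hl : sInf K - δ ∈ U := hδU <| Metric.mem_cthickening_of_dist_le _ _ _ _
    (hK.sInf_mem hne) (by simp [abs_of_pos hδ])
  have hr : sSup K + δ ∈ U := hδU <| Metric.mem_cthickening_of_dist_le _ _ _ _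
    (hK.sSup_mem hne) (by simp [abs_of_pos hδ])
  refine ⟨_, _, hconn.out hl hr, fun x hx => ⟨?_, ?_⟩⟩
  · linarith [csInf_le hK.bddBelow hx]
  · linarith [le_csSup hK.bddAbove hx]

lemma integrable_mul_of_tsupport_subset {U : Set ℝ} (hU : IsOpen U) {f v : ℝ → ℝ}
    (hf : ContinuousOn f U) (hv : Continuous v) (hvs : HasCompactSupport v)
    (hvU : tsupport v ⊆ U) : Integrable (fun x => f x * v x) :=
  ((hf.mul hv.continuousOn).continuous_of_tsupport_subset hU
    ((tsupport_mul_subset_right).trans hvU)).integrable_of_hasCompactSupport hvs.mul_left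

lemma hasDerivAt_integral_of_continuousOn {U : Set ℝ} (hU : IsOpen U) (hconn : U.OrdConnected)
    {f : ℝ → ℝ} (hf : ContinuousOn f U) {a x : ℝ} (ha : a ∈ U) (hx : x ∈ U) :
    HasDerivAt (fun y => ∫ t in a..y, f t) (f x) x :=
  intervalIntegral.integral_hasDerivAt_right
    ((hf.mono (hconn.uIcc_subset ha hx)).intervalIntegrable)
    (hf.stronglyMeasurableAtFilter hU x hx) (hf.continuousAt (hU.mem_nhds hx))

lemma integral_mul_deriv_eq_neg_integral_mul {U : Set ℝ} (hU : IsOpen U)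
    (hconn : U.OrdConnected) {u u' v : ℝ → ℝ} (hu : ∀ x ∈ U, HasDerivAt u (u' x) x)
    (hu' : ContinuousOn u' U) (hv : ContDiff ℝ 1 v) (hvs : HasCompactSupport v)
    (hvU : tsupport v ⊆ U) :
    ∫ x, u x * deriv v x = -∫ x, u' x * v x := by
  rcases (tsupport v).eq_empty_or_nonempty with h | hne
  · obtain rfl : v = 0 := by simpa [tsupport_eq_empty_iff] using h
    simp
  obtain ⟨l, r, hlr, hsub⟩ := exists_Icc_subset_of_isCompact hU hconn hvs hne hvU
  have hlr' : l ≤ r := by obtain ⟨x, hx⟩ := hne; exact (hsub hx).1.le.trans (hsub hx).2.le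
  have hIcc : uIcc l r ⊆ U := by rwa [uIcc_of_le hlr']
  have hsupp : ∀ w : ℝ → ℝ, Function.support w ⊆ tsupport v → Function.support w ⊆ Ioc l r :=
    fun w hw => hw.trans (hsub.trans Ioo_subset_Ioc_self)
  have hvl : v l = 0 := image_eq_zero_of_notMem_tsupport fun h => (hsub h).1.false
  have hvr : v r = 0 := image_eq_zero_of_notMem_tsupport fun h => (hsub h).2.false
  rw [← intervalIntegral.integral_eq_integral_of_support_subset
      (hsupp _ ((Function.support_mul_subset_right _ _).trans support_deriv_subset)),
    ← intervalIntegral.integral_eq_integral_of_support_subset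
      (hsupp _ ((Function.support_mul_subset_right _ _).trans (subset_tsupport v))),
    intervalIntegral.integral_mul_deriv_eq_deriv_mul (fun x hx => hu x (hIcc hx))
      (fun x _ => (hv.differentiable one_ne_zero x).hasDerivAt)
      ((hu'.mono hIcc).intervalIntegrable) ((hv.continuous_deriv le_rfl).intervalIntegrable _ _),
    hvl, hvr]
  ring

def AffineOnIcc (h : ℝ → ℝ) (a b : ℝ) : Prop :=
  ∀ x ∈ Icc a b, (h x - h a) * (b - a) = (h b - h a) * (x - a)

lemma affineOnIcc_of_deriv_deriv_eq_zero {f f' f'' : ℝ → ℝ} {a b : ℝ}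
    (hf : ∀ x, HasDerivAt f (f' x) x) (hf' : ∀ x, HasDerivAt f' (f'' x) x)
    (h0 : ∀ x ∈ Icc a b, f'' x = 0) : AffineOnIcc f a b := by
  have hconst : ∀ x ∈ Icc a b, f' x = f' a :=
    constant_of_has_deriv_right_zero (fun x _ => (hf' x).continuousAt.continuousWithinAt)
      fun x hx => h0 x (Ico_subset_Icc_self hx) ▸ (hf' x).hasDerivWithinAt
  have hline : ∀ x ∈ Icc a b, f x - f' a * x = f a - f' a * a := by
    refine constant_of_has_deriv_right_zero (f := fun x => f x - f' a * x)
      (fun x _ => ((hf x).continuousAt.sub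
        (continuousAt_const.mul continuousAt_id)).continuousWithinAt)
      fun x hx => ?_
    simpa [hconst x (Ico_subset_Icc_self hx)] using
      ((hf x).fun_sub ((hasDerivAt_id x).const_mul (f' a))).hasDerivWithinAt
  intro x hx
  linear_combination (b - a) * hline x hx - (x - a) * hline b ⟨hx.1.trans hx.2, le_rfl⟩

lemma IsTestFun.deriv {I : Set ℝ} {ψ : ℝ → ℝ} (hψ : IsTestFun I ψ) : IsTestFun I (deriv ψ) :=
  ⟨(contDiff_infty_iff_deriv.mp hψ.1).2, hψ.2.1.deriv, tsupport_deriv_subset.trans hψ.2.2⟩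

lemma convolution_deriv_deriv_eq_zero {U : Set ℝ} {h : ℝ → ℝ}
    (hh : ∀ ψ, IsTestFun U ψ → ∫ t, h t * deriv (deriv ψ) t = 0)
    (ρ : ContDiffBump (0 : ℝ)) {z : ℝ} (hz : Metric.closedBall z ρ.rOut ⊆ U) :
    (deriv (deriv (ρ.normed volume)) ⋆[ContinuousLinearMap.lsmul ℝ ℝ, volume] h) z = 0 := by
  set κ := ρ.normed volume
  have hψ : IsTestFun U fun t => κ (z - t) := by
    have hsupp : tsupport (fun t => κ (z - t)) ⊆ Metric.closedBall z ρ.rOut := by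
      refine closure_minimal (fun t ht => ?_) Metric.isClosed_closedBall
      have : z - t ∈ Metric.ball 0 ρ.rOut := ρ.support_normed_eq (μ := volume) ▸ ht
      simpa [dist_comm, Real.dist_eq] using (Metric.mem_ball.1 this).le
    exact ⟨ρ.contDiff_normed.comp (contDiff_const.sub contDiff_id),
      HasCompactSupport.intro' (isCompact_closedBall z _) Metric.isClosed_closedBall
        fun t ht => image_eq_zero_of_notMem_tsupport (f := fun t => κ (z - t))
          fun h => ht (hsupp h),
      hsupp.trans hz⟩
  have hψ'' : deriv (deriv fun t => κ (z - t)) = fun t => deriv (deriv κ) (z - t) := by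
    have h1 : deriv (fun t => κ (z - t)) = fun t => -deriv κ (z - t) :=
      funext fun t => deriv_comp_const_sub κ z t
    funext t
    rw [h1, deriv.fun_neg, deriv_comp_const_sub (deriv κ) z t, neg_neg]
  rw [convolution_lsmul_swap, ← hh _ hψ, hψ'']
  simp only [smul_eq_mul, mul_comm]

lemma affineOnIcc_of_continuous_of_integral_eq_zero {U : Set ℝ} (hU : IsOpen U) {h : ℝ → ℝ}
    (hc : Continuous h) (hh : ∀ ψ, IsTestFun U ψ → ∫ t, h t * deriv (deriv ψ) t = 0)
    {a b : ℝ} (hab : Icc a b ⊆ U) : AffineOnIcc h a b := by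
  obtain ⟨ε, hε, hεU⟩ := isCompact_Icc.exists_cthickening_subset_open hU hab
  let ρ : ℕ → ContDiffBump (0 : ℝ) := fun n =>
    ⟨ε / (n + 2), ε / (n + 1), by positivity, by gcongr; linarith⟩
  have hρ : Tendsto (fun n => (ρ n).rOut) atTop (nhds 0) := by
    simpa [ρ, div_eq_mul_one_div ε] using
      tendsto_one_div_add_atTop_nhds_zero_nat.const_mul ε
  have hball : ∀ n, ∀ z ∈ Icc a b, Metric.closedBall z (ρ n).rOut ⊆ U := fun n z hz =>
    (Metric.closedBall_subset_closedBall (div_le_self hε.le (by linarith [n.cast_nonneg (α := ℝ)]))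
      |>.trans ((Metric.closedBall_subset_cthickening hz ε).trans hεU))
  let κ := fun n => (ρ n).normed volume
  let m := fun n => κ n ⋆[ContinuousLinearMap.lsmul ℝ ℝ, volume] h
  have hκ : ∀ n, ContDiff ℝ (1 + 1) (κ n) := fun n => (ρ n).contDiff_normed
  have hmol : ∀ n, AffineOnIcc (m n) a b := fun n => affineOnIcc_of_deriv_deriv_eq_zero
      ((ρ n).hasCompactSupport_normed.hasDerivAt_convolution_left _ ((hκ n).of_le (by norm_num))
        hc.locallyIntegrable)
      ((ρ n).hasCompactSupport_normed.deriv.hasDerivAt_convolution_left _ (hκ n).deriv'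
        hc.locallyIntegrable)
      fun z hz => convolution_deriv_deriv_eq_zero hh (ρ n) (hball n z hz)
  have hlim : ∀ x, Tendsto (fun n => m n x) atTop (nhds (h x)) := fun x =>
    ContDiffBump.convolution_tendsto_right_of_continuous hρ hc x
  intro x hx
  exact tendsto_nhds_unique_of_eventuallyEq (((hlim x).sub (hlim a)).mul_const _)
    (((hlim b).sub (hlim a)).mul_const _) (Eventually.of_forall fun n => hmol n x hx)

lemma affineOnIcc_of_integral_eq_zero {U : Set ℝ} (hU : IsOpen U) (hconn : U.OrdConnected)
    {h : ℝ → ℝ} (hc : ContinuousOn h U)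
    (hh : ∀ ψ, IsTestFun U ψ → ∫ t, h t * deriv (deriv ψ) t = 0)
    {a b : ℝ} (ha : a ∈ U) (hb : b ∈ U) : AffineOnIcc h a b := by
  intro x hx
  obtain ⟨l, r, hlrU, hablr⟩ := exists_Icc_subset_of_isCompact hU hconn isCompact_Icc
    (nonempty_Icc.2 (hx.1.trans hx.2)) (hconn.out ha hb)
  have hlr : l ≤ r := (hablr hx).1.le.trans (hablr hx).2.le
  -- mollifying needs a continuous function on the whole line: extend `h` constantly off `[l, r]`
  set h' : ℝ → ℝ := fun t => h (projIcc l r hlr t)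
  have hh' : ∀ t ∈ Icc l r, h' t = h t := fun t ht => by simp [h', projIcc_of_mem hlr ht]
  have hc' : Continuous h' := hc.comp_continuous
    (continuous_subtype_val.comp continuous_projIcc) fun t => hlrU (projIcc l r hlr t).2
  have hz : ∀ ψ, IsTestFun (Ioo l r) ψ → ∫ t, h' t * deriv (deriv ψ) t = 0 := by
    intro ψ hψ
    rw [← hh ψ ⟨hψ.1, hψ.2.1, hψ.2.2.trans (Ioo_subset_Icc_self.trans hlrU)⟩]
    refine integral_congr_ae (Eventually.of_forall fun t => ?_)
    by_cases ht : t ∈ Icc l r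
    · simp only [hh' t ht]
    · have : t ∉ tsupport (deriv (deriv ψ)) := fun h =>
        ht (Ioo_subset_Icc_self (hψ.deriv.deriv.2.2 h))
      simp [image_eq_zero_of_notMem_tsupport this]
  have hab : a ≤ b := hx.1.trans hx.2
  have key := affineOnIcc_of_continuous_of_integral_eq_zero isOpen_Ioo hc' hz hablr x hx
  rwa [hh' x (Ioo_subset_Icc_self (hablr hx)), hh' a (Ioo_subset_Icc_self (hablr ⟨le_rfl, hab⟩)),
    hh' b (Ioo_subset_Icc_self (hablr ⟨hab, le_rfl⟩))] at key

lemma exists_affine_of_affineOnIcc {I : Set ℝ} {h : ℝ → ℝ}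
    (hchord : ∀ a ∈ I, ∀ b ∈ I, AffineOnIcc h a b) :
    ∃ A B : ℝ, ∀ x ∈ I, h x = A + B * x := by
  rcases I.subsingleton_or_nontrivial with hs | hnt
  · rcases I.eq_empty_or_nonempty with rfl | ⟨x₀, hx₀⟩
    · exact ⟨0, 0, by simp⟩
    · exact ⟨h x₀, 0, fun x hx => by rw [hs hx hx₀]; ring⟩
  obtain ⟨x₀, hx₀, y₀, hy₀, hxy⟩ := hnt.exists_lt
  refine ⟨h x₀ - (h y₀ - h x₀) / (y₀ - x₀) * x₀, (h y₀ - h x₀) / (y₀ - x₀), fun x hx => ?_⟩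
  have ha : min x x₀ ∈ I := by rcases min_choice x x₀ with e | e <;> rw [e] <;> assumption
  have hb : max x y₀ ∈ I := by rcases max_choice x y₀ with e | e <;> rw [e] <;> assumption
  set a := min x x₀
  set b := max x y₀
  have hab : b - a ≠ 0 :=
    (sub_pos.2 ((min_le_right _ _).trans_lt (hxy.trans_le (le_max_right _ _)))).ne'
  have line : ∀ u ∈ Icc a b, h u = h a + (h b - h a) / (b - a) * (u - a) := fun u hu => by
    field_simp
    linarith [hchord a ha b hb u hu]
  rw [line x ⟨min_le_left _ _, le_max_left _ _⟩,
    line x₀ ⟨min_le_right _ _, hxy.le.trans (le_max_right _ _)⟩,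
    line y₀ ⟨(min_le_right _ _).trans hxy.le, le_max_right _ _⟩]
  field_simp [sub_ne_zero.2 hxy.ne']
  ring

theorem exists_affine_of_integral_mul_deriv_deriv_eq_zero {U : Set ℝ} (hU : IsOpen U)
    (hconn : U.OrdConnected) {h : ℝ → ℝ} (hc : ContinuousOn h U)
    (hh : ∀ ψ, IsTestFun U ψ → ∫ t, h t * deriv (deriv ψ) t = 0) :
    ∃ A B : ℝ, ∀ x ∈ U, h x = A + B * x :=
  exists_affine_of_affineOnIcc fun _ ha _ hb =>
    affineOnIcc_of_integral_eq_zero hU hconn hc hh ha hb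

lemma IsTestFun.setIntegral_mul {I : Set ℝ} {ψ : ℝ → ℝ} (hψ : IsTestFun I ψ) (f : ℝ → ℝ) :
    ∫ t in I, f t * ψ t = ∫ t, f t * ψ t :=
  setIntegral_eq_integral_of_forall_compl_eq_zero fun t ht => by
    rw [image_eq_zero_of_notMem_tsupport fun h => ht (hψ.2.2 h), mul_zero]

lemma integral_mul_deriv_deriv_eq_zero_of_weak {I : Set ℝ} (hI : IsOpen I)
    (hconn : I.OrdConnected) {p f q G W : ℝ → ℝ} {c : ℝ} (hp : ContinuousOn p I)
    (hf : ContinuousOn f I) (hq : ContinuousOn q I) (hG : ∀ x ∈ I, HasDerivAt G (q x) x)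
    (hW : ∀ x ∈ I, HasDerivAt W (c * f x + G x) x) {ψ : ℝ → ℝ} (hψ : IsTestFun I ψ)
    (hweak : ∫ t in I, p t * iteratedDeriv 2 ψ t =
      c * (∫ t in I, f t * deriv ψ t) - ∫ t in I, q t * ψ t) :
    ∫ t, (p t + W t) * deriv (deriv ψ) t = 0 := by
  have hGc : ContinuousOn G I := fun x hx => (hG x hx).continuousAt.continuousWithinAt
  have hWc : ContinuousOn W I := fun x hx => (hW x hx).continuousAt.continuousWithinAt
  have hψ' := hψ.deriv
  have hψ'' := hψ'.deriv
  have hint : ∀ {u : ℝ → ℝ} {v : ℝ → ℝ}, ContinuousOn u I → IsTestFun I v →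
      Integrable (fun t => u t * v t) := fun hu hv =>
    integrable_mul_of_tsupport_subset hI hu hv.1.continuous hv.2.1 hv.2.2
  rw [iteratedDeriv_succ, iteratedDeriv_one, hψ''.setIntegral_mul, hψ'.setIntegral_mul,
    hψ.setIntegral_mul] at hweak
  have ibpW := integral_mul_deriv_eq_neg_integral_mul hI hconn hW
    ((continuousOn_const.mul hf).add hGc) (hψ'.1.of_le (by simp)) hψ'.2.1 hψ'.2.2
  have ibpG := integral_mul_deriv_eq_neg_integral_mul hI hconn hG hq
    (hψ.1.of_le (by simp)) hψ.2.1 hψ.2.2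
  simp only [add_mul, mul_assoc] at ibpW ⊢
  rw [integral_add (hint hp hψ'') (hint hWc hψ''), hweak, ibpW,
    integral_add ((hint hf hψ').const_mul c) (hint hGc hψ'), integral_const_mul, ibpG]
  ring

theorem IsTW.exists_flux {P g : ℝ → ℝ} {I : Set ℝ} {c : ℝ} {φ : ℝ → ℝ}
    (hTW : IsTW P g I c φ) (hφ : ContinuousOn φ I) (hP : ContinuousOn P (Icc 0 1))
    (hg : ContinuousOn g (Icc 0 1)) :
    ∃ d : ℝ → ℝ, (∀ ξ ∈ I, HasDerivAt (fun t => P (φ t)) (d ξ) ξ) ∧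
      ∀ u ∈ I, ∀ v ∈ I, d v - d u = -c * (φ v - φ u) - ∫ s in u..v, g (φ s) := by
  rcases I.eq_empty_or_nonempty with rfl | ⟨ξ₀, hξ₀⟩
  · exact ⟨0, by simp, by simp⟩
  have hI := hTW.isOpen
  have hconn := hTW.ordConn
  have hgφ : ContinuousOn (fun t => g (φ t)) I := hg.comp hφ hTW.mapsTo
  set G : ℝ → ℝ := fun ξ => ∫ s in ξ₀..ξ, g (φ s)
  have hG : ∀ ξ ∈ I, HasDerivAt G (g (φ ξ)) ξ := fun ξ hξ =>
    hasDerivAt_integral_of_continuousOn hI hconn hgφ hξ₀ hξ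
  have hGc : ContinuousOn G I := fun ξ hξ => (hG ξ hξ).continuousAt.continuousWithinAt
  set W : ℝ → ℝ := fun ξ => ∫ s in ξ₀..ξ, (c * φ s + G s)
  have hW : ∀ ξ ∈ I, HasDerivAt W (c * φ ξ + G ξ) ξ := fun ξ hξ =>
    hasDerivAt_integral_of_continuousOn hI hconn ((continuousOn_const.mul hφ).add hGc) hξ₀ hξ
  have hPφ : ContinuousOn (fun t => P (φ t)) I := hP.comp hφ hTW.mapsTo
  obtain ⟨A, B, hAB⟩ := exists_affine_of_integral_mul_deriv_deriv_eq_zero hI hconn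
    (hPφ.add fun ξ hξ => (hW ξ hξ).continuousAt.continuousWithinAt) fun ψ hψ =>
      integral_mul_deriv_deriv_eq_zero_of_weak hI hconn hPφ hφ hgφ hG hW hψ (hTW.weak_eq ψ hψ)
  refine ⟨fun ξ => B - (c * φ ξ + G ξ), fun ξ hξ => ?_, fun u hu v hv => ?_⟩
  · have hline : HasDerivAt (fun t => A + B * t - W t) (B - (c * φ ξ + G ξ)) ξ := by
      simpa using (((hasDerivAt_id ξ).const_mul B).const_add A).fun_sub (hW ξ hξ)
    refine hline.congr_of_eventuallyEq ?_
    filter_upwards [hI.mem_nhds hξ] with t ht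
    simp [← hAB t ht]
  · have := intervalIntegral.integral_interval_sub_left
      ((hgφ.mono (hconn.uIcc_subset hξ₀ hv)).intervalIntegrable (μ := volume))
      ((hgφ.mono (hconn.uIcc_subset hξ₀ hu)).intervalIntegrable)
    simp only [G]
    linarith

lemma IsPreconnected.Ioo_subset_of_isGLB_of_isLUB {α : Type*} [LinearOrder α]
    [TopologicalSpace α] [OrderTopology α] {s : Set α} {m M : α} (hs : IsPreconnected s)
    (hm : IsGLB s m) (hM : IsLUB s M) : Ioo m M ⊆ s := fun _ hv =>
  let ⟨_, ha, _, hav⟩ := hm.exists_between hv.1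
  let ⟨_, hb, hvb, _⟩ := hM.exists_between hv.2
  hs.Icc_subset ha hb ⟨hav.le, hvb.le⟩

lemma accPt_inter_Iic {I : Set ℝ} {x : ℝ} (hI : I ∈ nhds x) : AccPt x (𝓟 (I ∩ Iic x)) := by
  refine accPt_principal_iff_nhdsWithin.2
    ((inferInstance : NeBot (nhdsWithin x (Iio x))).mono (nhdsWithin_le_iff.2 ?_))
  filter_upwards [mem_nhdsWithin_of_mem_nhds hI, self_mem_nhdsWithin] with y hyI hyx
  exact ⟨⟨hyI, mem_Iic.2 hyx.le⟩, ne_of_lt hyx⟩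

lemma accPt_inter_Ici {I : Set ℝ} {x : ℝ} (hI : I ∈ nhds x) : AccPt x (𝓟 (I ∩ Ici x)) := by
  refine accPt_principal_iff_nhdsWithin.2
    ((inferInstance : NeBot (nhdsWithin x (Ioi x))).mono (nhdsWithin_le_iff.2 ?_))
  filter_upwards [mem_nhdsWithin_of_mem_nhds hI, self_mem_nhdsWithin] with y hyI hyx
  exact ⟨⟨hyI, mem_Ici.2 hyx.le⟩, ne_of_gt hyx⟩

lemma isGLB_image_of_tendsto {φ : ℝ → ℝ} {I : Set ℝ} {F : Filter ℝ} [F.NeBot] {L : ℝ}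
    (hφ : AntitoneOn φ I) (hFI : ∀ᶠ η in F, η ∈ I) (hF : ∀ ξ ∈ I, ∀ᶠ η in F, ξ ≤ η)
    (hlim : Tendsto φ F (nhds L)) : IsGLB (φ '' I) L := by
  refine ⟨?_, fun b hb => ge_of_tendsto hlim ?_⟩
  · rintro _ ⟨ξ, hξ, rfl⟩
    exact le_of_tendsto hlim (by filter_upwards [hF ξ hξ, hFI] with η hξη hη using hφ hξ hη hξη)
  · filter_upwards [hFI] with η hη using hb ⟨η, hη, rfl⟩

lemma isLUB_image_of_tendsto {φ : ℝ → ℝ} {I : Set ℝ} {F : Filter ℝ} [F.NeBot] {L : ℝ}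
    (hφ : AntitoneOn φ I) (hFI : ∀ᶠ η in F, η ∈ I) (hF : ∀ ξ ∈ I, ∀ᶠ η in F, η ≤ ξ)
    (hlim : Tendsto φ F (nhds L)) : IsLUB (φ '' I) L := by
  refine ⟨?_, fun b hb => le_of_tendsto hlim ?_⟩
  · rintro _ ⟨ξ, hξ, rfl⟩
    exact ge_of_tendsto hlim (by filter_upwards [hF ξ hξ, hFI] with η hηξ hη using hφ hη hξ hηξ)
  · filter_upwards [hFI] with η hη using hb ⟨η, hη, rfl⟩

lemma leftRay_coe (x : ℝ) : leftRay x = Iio x := by ext; simp [leftRay]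

lemma leftRay_top : leftRay ⊤ = univ := by ext; simp [leftRay]

lemma rightRay_coe (x : ℝ) : rightRay x = Ioi x := by ext; simp [rightRay]

lemma rightRay_bot : rightRay ⊥ = univ := by ext; simp [rightRay]

lemma TendstoRightEnd.isGLB_image {φ : ℝ → ℝ} {a : EReal} {L : ℝ} (h : TendstoRightEnd φ a L)
    (hne : (leftRay a).Nonempty) (hφ : AntitoneOn φ (leftRay a)) :
    IsGLB (φ '' leftRay a) L := by
  induction a using EReal.rec with
  | bot => simp [leftRay] at hne
  | coe x =>
    rw [leftRay_coe] at hφ ⊢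
    exact isGLB_image_of_tendsto (F := nhdsWithin x (Iio x)) hφ self_mem_nhdsWithin
      (fun ξ hξ => by filter_upwards [Ioo_mem_nhdsLT hξ] with η hη using hη.1.le) (h.2 x rfl)
  | top =>
    rw [leftRay_top] at hφ ⊢
    exact isGLB_image_of_tendsto hφ univ_mem (fun ξ _ => eventually_ge_atTop ξ) (h.1 rfl)

lemma TendstoLeftEnd.isLUB_image {φ : ℝ → ℝ} {a : EReal} {L : ℝ} (h : TendstoLeftEnd φ a L)
    (hne : (rightRay a).Nonempty) (hφ : AntitoneOn φ (rightRay a)) :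
    IsLUB (φ '' rightRay a) L := by
  induction a using EReal.rec with
  | bot =>
    rw [rightRay_bot] at hφ ⊢
    exact isLUB_image_of_tendsto hφ univ_mem (fun ξ _ => eventually_le_atBot ξ) (h.1 rfl)
  | coe x =>
    rw [rightRay_coe] at hφ ⊢
    exact isLUB_image_of_tendsto (F := nhdsWithin x (Ioi x)) hφ self_mem_nhdsWithin
      (fun ξ hξ => by filter_upwards [Ioo_mem_nhdsGT hξ] with η hη using hη.2.le) (h.2 x rfl)
  | top => simp [rightRay] at hne

lemma IsSemiWFfrom1.antitoneOn_isLUB_isGLB {P g φ : ℝ → ℝ} {a : EReal} {c σ : ℝ}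
    (hW : IsSemiWFfrom1 P g a c φ) (hend : TendstoRightEnd φ a σ) :
    AntitoneOn φ (leftRay a) ∧ IsLUB (φ '' leftRay a) 1 ∧ IsGLB (φ '' leftRay a) σ := by
  obtain ⟨hTW, -, hmono, hnc, hlim⟩ := hW
  obtain ⟨z, hz⟩ : (leftRay a).Nonempty := nonempty_iff_ne_empty.2 fun h => hnc ⟨0, by simp [h]⟩
  have hbot : ∀ᶠ ξ in atBot, ξ ∈ leftRay a := by
    filter_upwards [eventually_le_atBot z] with ξ hξ
    exact lt_of_le_of_lt (EReal.coe_le_coe_iff.2 hξ) hz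
  have hanti : AntitoneOn φ (leftRay a) := hmono.resolve_left fun hm => hnc ⟨1, fun ξ hξ =>
    le_antisymm (hTW.mapsTo ξ hξ).2 <| le_of_tendsto hlim <| by
      filter_upwards [eventually_le_atBot ξ, hbot] with η hηξ hη using hm hη hξ hηξ⟩
  exact ⟨hanti, isLUB_image_of_tendsto hanti hbot (fun ξ _ => eventually_le_atBot ξ) hlim,
    hend.isGLB_image ⟨z, hz⟩ hanti⟩

lemma IsSemiWFto0.antitoneOn_isLUB_isGLB {P g φ : ℝ → ℝ} {a : EReal} {c σ : ℝ}
    (hW : IsSemiWFto0 P g a c φ) (hend : TendstoLeftEnd φ a σ) :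
    AntitoneOn φ (rightRay a) ∧ IsLUB (φ '' rightRay a) σ ∧ IsGLB (φ '' rightRay a) 0 := by
  obtain ⟨hTW, -, hmono, hnc, hlim⟩ := hW
  obtain ⟨z, hz⟩ : (rightRay a).Nonempty := nonempty_iff_ne_empty.2 fun h => hnc ⟨0, by simp [h]⟩
  have htop : ∀ᶠ ξ in atTop, ξ ∈ rightRay a := by
    filter_upwards [eventually_ge_atTop z] with ξ hξ
    exact lt_of_lt_of_le hz (EReal.coe_le_coe_iff.2 hξ)
  have hanti : AntitoneOn φ (rightRay a) := hmono.resolve_left fun hm => hnc ⟨0, fun ξ hξ =>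
    le_antisymm (ge_of_tendsto hlim <| by
      filter_upwards [eventually_ge_atTop ξ, htop] with η hξη hη using hm hξ hη hξη)
      (hTW.mapsTo ξ hξ).1⟩
  exact ⟨hanti, hend.isLUB_image ⟨z, hz⟩ hanti,
    isGLB_image_of_tendsto hanti htop (fun ξ _ => eventually_ge_atTop ξ) hlim⟩

theorem speed_pos_of_flux {P g φ d : ℝ → ℝ} {I : Set ℝ} {α β γ σ c : ℝ}
    (hI : IsOpen I) (hconn : I.OrdConnected) (hφ : ContinuousOn φ I) (hanti : AntitoneOn φ I)
    (hsup : IsLUB (φ '' I) 1) (hinf : IsGLB (φ '' I) σ)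
    (hασ : α < σ) (hσβ : σ < β) (hγβ : γ < β) (hβ1 : β < 1)
    (hPαβ : AntitoneOn P (Icc α β)) (hPβ1 : MonotoneOn P (Icc β 1))
    (hgc : ContinuousOn g (Ioo γ 1)) (hg : ∀ u ∈ Ioo γ 1, 0 < g u)
    (hd : ∀ ξ ∈ I, HasDerivAt (fun t => P (φ t)) (d ξ) ξ)
    (hdiff : ∀ u ∈ I, ∀ v ∈ I, d v - d u = -c * (φ v - φ u) - ∫ s in u..v, g (φ s)) :
    0 < c := by
  obtain ⟨μ, hμ, hμβ⟩ := exists_between (max_lt hσβ hγβ)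
  obtain ⟨hσμ, hγμ⟩ := max_lt_iff.1 hμ
  have hIoo := (hconn.isPreconnected.image φ hφ).Ioo_subset_of_isGLB_of_isLUB hinf hsup
  obtain ⟨q, hq, hφq⟩ := hIoo ⟨hσβ, hβ1⟩
  obtain ⟨ξ, hξ, hφξ⟩ := hIoo ⟨hσμ, hμβ.trans hβ1⟩
  have hqξ : q < ξ := hanti.reflect_lt hξ hq (by linarith)
  have hφ1 : ∀ t ∈ I, φ t ≤ 1 := fun t ht => hsup.1 ⟨t, ht, rfl⟩
  have hσφ : ∀ t ∈ I, σ ≤ φ t := fun t ht => hinf.1 ⟨t, ht, rfl⟩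
  have hdq : d q ≤ 0 := (hd q hq).hasDerivWithinAt.nonpos_of_antitoneOn
    (accPt_inter_Iic (hI.mem_nhds hq)) <| hPβ1.comp_AntitoneOn (hanti.mono inter_subset_left)
      fun t ht => ⟨hφq ▸ hanti ht.1 hq ht.2, hφ1 t ht.1⟩
  have hdξ : 0 ≤ d ξ := (hd ξ hξ).hasDerivWithinAt.nonneg_of_monotoneOn
    (accPt_inter_Ici (hI.mem_nhds hξ)) <| hPαβ.comp (hanti.mono inter_subset_left)
      fun t ht => ⟨hασ.le.trans (hσφ t ht.1), (hanti hξ ht.1 ht.2).trans (hφξ ▸ hμβ.le)⟩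
  have hint : 0 < ∫ s in q..ξ, g (φ s) := by
    have hrange : MapsTo φ (Icc q ξ) (Ioo γ 1) := fun t ht => by
      have := hconn.out hq hξ ht
      exact ⟨hγμ.trans_le (hφξ ▸ hanti this hξ ht.2),
        (hanti hq this ht.1).trans_lt (hφq ▸ hβ1)⟩
    exact intervalIntegral.intervalIntegral_pos_of_pos_on
      (((hgc.comp (hφ.mono (hconn.out hq hξ)) hrange).mono
        (uIcc_of_le hqξ.le).subset).intervalIntegrable)
      (fun t ht => hg _ (hrange (Ioo_subset_Icc_self ht))) hqξ
  have := hdiff q hq ξ hξ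
  rw [hφq, hφξ] at this
  nlinarith

theorem speed_neg_of_flux {P g φ d : ℝ → ℝ} {I : Set ℝ} {α β γ σ c : ℝ}
    (hI : IsOpen I) (hconn : I.OrdConnected) (hφ : ContinuousOn φ I) (hanti : AntitoneOn φ I)
    (hsup : IsLUB (φ '' I) σ) (hinf : IsGLB (φ '' I) 0)
    (h0α : 0 < α) (hαγ : α < γ) (hασ : α < σ) (hσβ : σ < β)
    (hP0α : MonotoneOn P (Icc 0 α)) (hPαβ : AntitoneOn P (Icc α β))
    (hgc : ContinuousOn g (Ioo 0 γ)) (hg : ∀ u ∈ Ioo 0 γ, g u < 0)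
    (hd : ∀ ξ ∈ I, HasDerivAt (fun t => P (φ t)) (d ξ) ξ)
    (hdiff : ∀ u ∈ I, ∀ v ∈ I, d v - d u = -c * (φ v - φ u) - ∫ s in u..v, g (φ s)) :
    c < 0 := by
  obtain ⟨μ, hαμ, hμ⟩ := exists_between (lt_min hασ hαγ)
  obtain ⟨hμσ, hμγ⟩ := lt_min_iff.1 hμ
  have hIoo := (hconn.isPreconnected.image φ hφ).Ioo_subset_of_isGLB_of_isLUB hinf hsup
  obtain ⟨p, hp, hφp⟩ := hIoo ⟨h0α, hασ⟩
  obtain ⟨ξ, hξ, hφξ⟩ := hIoo ⟨h0α.trans hαμ, hμσ⟩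
  have hξp : ξ < p := hanti.reflect_lt hp hξ (by linarith)
  have hφσ : ∀ t ∈ I, φ t ≤ σ := fun t ht => hsup.1 ⟨t, ht, rfl⟩
  have hφ0 : ∀ t ∈ I, 0 ≤ φ t := fun t ht => hinf.1 ⟨t, ht, rfl⟩
  have hdp : d p ≤ 0 := (hd p hp).hasDerivWithinAt.nonpos_of_antitoneOn
    (accPt_inter_Ici (hI.mem_nhds hp)) <| hP0α.comp_AntitoneOn (hanti.mono inter_subset_left)
      fun t ht => ⟨hφ0 t ht.1, hφp ▸ hanti hp ht.1 ht.2⟩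
  have hdξ : 0 ≤ d ξ := (hd ξ hξ).hasDerivWithinAt.nonneg_of_monotoneOn
    (accPt_inter_Iic (hI.mem_nhds hξ)) <| hPαβ.comp (hanti.mono inter_subset_left)
      fun t ht => ⟨(hφξ ▸ hαμ.le).trans (hanti ht.1 hξ ht.2), (hφσ t ht.1).trans hσβ.le⟩
  have hint : ∫ s in ξ..p, g (φ s) < 0 := by
    have hrange : MapsTo φ (Icc ξ p) (Ioo 0 γ) := fun t ht => by
      have := hconn.out hξ hp ht
      exact ⟨h0α.trans_le (hφp ▸ hanti this hp ht.2),
        (hanti hξ this ht.1).trans_lt (hφξ ▸ hμγ)⟩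
    have hpos := intervalIntegral.intervalIntegral_pos_of_pos_on (f := fun s => -g (φ s))
      (((hgc.comp (hφ.mono (hconn.out hξ hp)) hrange).neg.mono
        (uIcc_of_le hξp.le).subset).intervalIntegrable)
      (fun t ht => neg_pos.2 (hg _ (hrange (Ioo_subset_Icc_self ht)))) hξp
    rwa [intervalIntegral.integral_neg, neg_pos] at hpos
  have := hdiff ξ hξ p hp
  rw [hφp, hφξ] at this
  nlinarith

lemma CondP.monotoneOn_antitoneOn {P : ℝ → ℝ} {α β : ℝ} (hP : CondP P α β)
    (hPc : ContinuousOn P (Icc 0 1)) (h0α : 0 ≤ α) (hαβ : α ≤ β) (hβ1 : β ≤ 1) :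
    MonotoneOn P (Icc 0 α) ∧ AntitoneOn P (Icc α β) ∧ MonotoneOn P (Icc β 1) :=
  ⟨(strictMonoOn_of_deriv_pos (convex_Icc 0 α) (hPc.mono (Icc_subset_Icc le_rfl (hαβ.trans hβ1)))
      fun u hu => hP.1 u (Or.inl (by rwa [interior_Icc] at hu))).monotoneOn,
    (strictAntiOn_of_deriv_neg (convex_Icc α β) (hPc.mono (Icc_subset_Icc h0α hβ1))
      fun u hu => hP.2 u (by rwa [interior_Icc] at hu)).antitoneOn,
    (strictMonoOn_of_deriv_pos (convex_Icc β 1) (hPc.mono (Icc_subset_Icc (h0α.trans hαβ) le_rfl))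
      fun u hu => hP.1 u (Or.inr (by rwa [interior_Icc] at hu))).monotoneOn⟩

/-- **Proposition 4.6**: if `σ ∈ (α,β)` and there is a regular semi-wavefront
from `1` connecting `1` to `σ` with speed `c`, then `c > 0`; if there is a
regular semi-wavefront to `0` connecting `σ` to `0` with speed `c`, then
`c < 0`. -/
theorem speed_sign_of_semi_wavefronts_into_backward_region
    (P g : ℝ → ℝ) (α β γ : ℝ)
    (h0α : 0 < α) (hαγ : α < γ) (hγβ : γ < β) (hβ1 : β < 1)
    (hR : CondR P g) (hP : CondP P α β) (hg : Condg g γ)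
    (σ : ℝ) (hσ : σ ∈ Ioo α β) :
    (∀ (a : EReal) (c : ℝ) (φ : ℝ → ℝ),
      IsSemiWFfrom1 P g a c φ → TendstoRightEnd φ a σ → 0 < c) ∧
    (∀ (a : EReal) (c : ℝ) (φ : ℝ → ℝ),
      IsSemiWFto0 P g a c φ → TendstoLeftEnd φ a σ → c < 0) := by
  obtain ⟨hασ, hσβ⟩ := hσ
  obtain ⟨hPc, hgc⟩ : ContinuousOn P (Icc 0 1) ∧ ContinuousOn g (Icc 0 1) :=
    ⟨hR.1.continuousOn, hR.2.1⟩
  obtain ⟨hP0α, hPαβ, hPβ1⟩ := hP.monotoneOn_antitoneOn hPc h0α.le (hαγ.trans hγβ).le hβ1.le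
  obtain ⟨-, -, hgneg, hgpos⟩ := hg
  refine ⟨fun a c φ hW hend => ?_, fun a c φ hW hend => ?_⟩
  · obtain ⟨hanti, hsup, hinf⟩ := hW.antitoneOn_isLUB_isGLB hend
    obtain ⟨d, hd, hdiff⟩ := hW.1.exists_flux hW.2.1 hPc hgc
    exact speed_pos_of_flux hW.1.isOpen hW.1.ordConn hW.2.1 hanti hsup hinf hασ hσβ hγβ hβ1
      hPαβ hPβ1 (hgc.mono (Ioo_subset_Icc_self.trans (Icc_subset_Icc (h0α.trans hαγ).le le_rfl)))
      hgpos hd hdiff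
  · obtain ⟨hanti, hsup, hinf⟩ := hW.antitoneOn_isLUB_isGLB hend
    obtain ⟨d, hd, hdiff⟩ := hW.1.exists_flux hW.2.1 hPc hgc
    exact speed_neg_of_flux hW.1.isOpen hW.1.ordConn hW.2.1 hanti hsup hinf h0α hαγ hασ hσβ
      hP0α hPαβ (hgc.mono (Ioo_subset_Icc_self.trans (Icc_subset_Icc le_rfl (hγβ.trans hβ1).le)))
      hgneg hd hdiff
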